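/- Consider the WARM triangle graph with α ≥ 4/3. There is no equilibrium (v_1, v_2, v_3) ∈ Δ_3 with v_1 ≥ v_2 > v_3 > 0; equivalently, every equilibrium with v_1 ≥ v_2 ≥ v_3 satisfies v_2 = v_3 or v_3 = 0. -/

import Mathlib

open Finset

noncomputable section

/-- Membership in the simplex `Δ`. -/
def InSimplex {ι : Type*} [Fintype ι] (v : ι → ℝ) : Prop :=
  (∀ i, 0 ≤ v i) ∧ ∑ i, v i = 1

/-- A WARM weight: a probability distribution on the subsets of the colour set,
giving no mass to the empty set. -/
def IsWarmWeight {ι : Type*} [Fintype ι] [DecidableEq ι] (p : Finset ι → ℝ) : Prop :=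
  p ∅ = 0 ∧ (∀ A, 0 ≤ p A ∧ p A ≤ 1) ∧ ∑ A : Finset ι, p A = 1

/-- The WARM vector field `F`. -/
def warmF {ι : Type*} [Fintype ι] [DecidableEq ι] (α : ℝ) (p : Finset ι → ℝ)
    (v : ι → ℝ) (i : ι) : ℝ :=
  -v i + ∑ A ∈ Finset.univ.filter (fun A : Finset ι => i ∈ A),
      p A * v i ^ α / (∑ j ∈ A, v j ^ α)

/-- The Jacobian matrix `D(v)`. -/
def warmD {ι : Type*} [Fintype ι] [DecidableEq ι] (α : ℝ) (p : Finset ι → ℝ)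
    (v : ι → ℝ) : Matrix ι ι ℝ :=
  Matrix.of fun i k =>
    if i = k then
      -1 + α * v i ^ (α - 1) *
        ∑ A ∈ Finset.univ.filter (fun A : Finset ι => i ∈ A),
          p A * ((∑ j ∈ A, v j ^ α) - v i ^ α) / (∑ j ∈ A, v j ^ α) ^ 2
    else
      -(α * v k ^ (α - 1) * v i ^ α *
        ∑ A ∈ Finset.univ.filter (fun A : Finset ι => i ∈ A ∧ k ∈ A),
          p A / (∑ j ∈ A, v j ^ α) ^ 2)

/-- `μ ∈ ℂ` is an eigenvalue of the real matrix `M`, i.e. a root of its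
characteristic polynomial. -/
def IsEigenvalue {ι : Type*} [Fintype ι] [DecidableEq ι] (M : Matrix ι ι ℝ) (μ : ℂ) : Prop :=
  (M.charpoly.map (algebraMap ℝ ℂ)).IsRoot μ

/-- Linear stability: every complex eigenvalue has negative real part. -/
def LinStable {ι : Type*} [Fintype ι] [DecidableEq ι] (M : Matrix ι ι ℝ) : Prop :=
  ∀ μ : ℂ, IsEigenvalue M μ → μ.re < 0

/-- Linear instability: some eigenvalue has positive real part. -/
def LinUnstable {ι : Type*} [Fintype ι] [DecidableEq ι] (M : Matrix ι ι ℝ) : Prop :=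
  ∃ μ : ℂ, IsEigenvalue M μ ∧ 0 < μ.re

/-- Critical: neither linearly stable nor linearly unstable. -/
def CriticalPt {ι : Type*} [Fintype ι] [DecidableEq ι] (M : Matrix ι ι ℝ) : Prop :=
  ¬ LinStable M ∧ ¬ LinUnstable M


/-- The WARM triangle graph weight: each of the three two-element subsets of `[3]` gets
mass `1/3`. -/
def ptri : Finset (Fin 3) → ℝ := fun A => if A.card = 2 then 1 / 3 else 0

/-!
At a coordinate `v_i > 0`, with `a = v ^ α`, the equilibrium equation reads
`3 / v_i ^ (α - 1) = 1 / (a_i + a_j) + 1 / (a_i + a_k)`. Put `u_i = v_i ^ (α - 1)` and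
`p = α / (α - 1) > 1`, so that `a_i = u_i ^ p`. Subtracting the equation at the smallest
coordinate `v₃` from those at `v₁` and `v₂` yields
`u_i * (u_i ^ p - u₃ ^ p) / (u_i - u₃) = 3 (a₁ + a₂) (a_j + a₃) / u₃` with `{i, j} = {1, 2}`.
The left side is increasing in `u_i` by strict convexity of `u ^ p`, while the right sides are
ordered the other way round, so `v₁ = v₂`. The equation at `v₃` together with `2 v₂ + v₃ = 1`
then gives `3 t ^ α = 4 t - 1` for `t = v₂ / v₃ > 1`, which Bernoulli's inequality excludes
once `α ≥ 4/3`.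
-/

open Real

/-- The equilibrium equation of the triangle graph at a coordinate `x` whose other two
coordinates are `y` and `z`. -/
def TriangleBalance (α x y z : ℝ) : Prop :=
  x = (x ^ α / (x ^ α + y ^ α) + x ^ α / (x ^ α + z ^ α)) / 3

lemma filter_mem_card_two_eq {i j k : Fin 3} (hij : i ≠ j) (hik : i ≠ k) (hjk : j ≠ k) :
    univ.filter (fun A : Finset (Fin 3) => i ∈ A ∧ #A = 2) = {{i, j}, {i, k}} := by
  revert i j k
  decide

lemma warmF_ptri (α : ℝ) (v : Fin 3 → ℝ) {i j k : Fin 3} (hij : i ≠ j) (hik : i ≠ k)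
    (hjk : j ≠ k) :
    warmF α ptri v i =
      (v i ^ α / (v i ^ α + v j ^ α) + v i ^ α / (v i ^ α + v k ^ α)) / 3 - v i := by
  have hpairs : ({i, j} : Finset (Fin 3)) ≠ {i, k} := by
    intro h
    have : j ∈ ({i, k} : Finset (Fin 3)) := h ▸ mem_insert_of_mem (mem_singleton_self j)
    simp [hij.symm, hjk] at this
  rw [warmF, ← sum_filter_of_ne (p := fun A => #A = 2), filter_filter,
    filter_mem_card_two_eq hij hik hjk, sum_pair hpairs]
  · simp only [ptri, mem_singleton, hij, hik, not_false_eq_true, card_insert_of_notMem,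
      card_singleton, Nat.reduceAdd, ↓reduceIte, sum_pair hij, sum_pair hik]
    ring
  · intro A _ hA
    by_contra h
    simp [ptri, h] at hA

lemma warmF_ptri_eq_zero_iff (α : ℝ) (v : Fin 3 → ℝ) {i j k : Fin 3} (hij : i ≠ j)
    (hik : i ≠ k) (hjk : j ≠ k) :
    warmF α ptri v i = 0 ↔ TriangleBalance α (v i) (v j) (v k) := by
  rw [warmF_ptri α v hij hik hjk, sub_eq_zero, TriangleBalance, eq_comm]

lemma TriangleBalance.three_div_rpow_sub_one {α x y z : ℝ} (h : TriangleBalance α x y z)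
    (hx : 0 < x) (hy : 0 ≤ y) (hz : 0 ≤ z) :
    3 / x ^ (α - 1) = 1 / (x ^ α + y ^ α) + 1 / (x ^ α + z ^ α) := by
  have : 0 < x ^ α := by positivity
  have : 0 ≤ y ^ α := by positivity
  have : 0 ≤ z ^ α := by positivity
  rw [TriangleBalance] at h
  rw [rpow_sub_one hx.ne']
  field_simp at h ⊢
  linear_combination h

lemma mul_mul_sub_eq_of_three_div_eq {a b c u w : ℝ} (hab : 0 < a + b) (hac : 0 < a + c)
    (hbc : 0 < b + c) (hu : 0 < u) (hw : 0 < w)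
    (hbal_u : 3 / u = 1 / (b + a) + 1 / (b + c)) (hbal_w : 3 / w = 1 / (c + a) + 1 / (c + b)) :
    u * w * (b - c) = 3 * (u - w) * (a + b) * (a + c) := by
  rw [add_comm b a] at hbal_u
  rw [add_comm c a, add_comm c b] at hbal_w
  field_simp at hbal_u hbal_w
  linear_combination (3 * (a + c) - w) * hbal_u + (u - 3 * (a + b)) * hbal_w

lemma mul_rpow_secant_lt {p w u u' : ℝ} (hp : 1 < p) (hw : 0 < w) (hwu : w < u) (huu' : u < u') :
    u * ((u ^ p - w ^ p) / (u - w)) < u' * ((u' ^ p - w ^ p) / (u' - w)) := by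
  have hslope : (u ^ p - w ^ p) / (u - w) < (u' ^ p - w ^ p) / (u' - w) :=
    (strictConvexOn_rpow hp).secant_strict_mono (Set.mem_Ici.2 hw.le)
      (Set.mem_Ici.2 (hw.trans hwu).le) (Set.mem_Ici.2 (hw.trans (hwu.trans huu')).le)
      hwu.ne' (hwu.trans huu').ne' huu'
  have hpos : 0 < (u ^ p - w ^ p) / (u - w) :=
    div_pos (sub_pos.2 (rpow_lt_rpow hw.le hwu (by linarith))) (sub_pos.2 hwu)
  exact mul_lt_mul'' huu' hslope (hw.trans hwu).le hpos.le

lemma TriangleBalance.comm {α x y z : ℝ} (h : TriangleBalance α x y z) :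
    TriangleBalance α x z y := by
  rw [TriangleBalance, add_comm]
  exact h

lemma TriangleBalance.mul_secant_eq {α x y z : ℝ} (hα : 1 < α) (hx : 0 ≤ x) (hz : 0 < z)
    (hzy : z < y) (hby : TriangleBalance α y x z) (hbz : TriangleBalance α z x y) :
    y ^ (α - 1) * ((y ^ α - z ^ α) / (y ^ (α - 1) - z ^ (α - 1))) =
      3 * (x ^ α + y ^ α) * (x ^ α + z ^ α) / z ^ (α - 1) := by
  have hy : 0 < y := hz.trans hzy
  have hwu : y ^ (α - 1) - z ^ (α - 1) ≠ 0 :=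
    (sub_pos.2 (rpow_lt_rpow hz.le hzy (by linarith))).ne'
  have hw : 0 < z ^ (α - 1) := by positivity
  have key := mul_mul_sub_eq_of_three_div_eq (by positivity) (by positivity) (by positivity)
    (by positivity) hw (hby.three_div_rpow_sub_one hy hx hz.le)
    (hbz.three_div_rpow_sub_one hz hx hy.le)
  field_simp
  linear_combination key

lemma TriangleBalance.le_of_lt {α x y z : ℝ} (hα : 1 < α) (hz : 0 < z) (hzy : z < y)
    (hbx : TriangleBalance α x y z) (hby : TriangleBalance α y x z)
    (hbz : TriangleBalance α z x y) : x ≤ y := by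
  by_contra! hyx
  have hy : 0 < y := hz.trans hzy
  have hx : 0 < x := hy.trans hyx
  have hα0 : 0 < α - 1 := by linarith
  have hp : 1 < α / (α - 1) := by rw [one_lt_div hα0]; linarith
  have hpow (s : ℝ) (hs : 0 ≤ s) : (s ^ (α - 1)) ^ (α / (α - 1)) = s ^ α := by
    rw [← rpow_mul hs, mul_div_cancel₀ _ hα0.ne']
  have hmono := mul_rpow_secant_lt hp (rpow_pos_of_pos hz _)
    (rpow_lt_rpow hz.le hzy hα0) (rpow_lt_rpow hy.le hyx hα0)
  rw [hpow x hx.le, hpow y hy.le, hpow z hz.le, hby.mul_secant_eq hα hx.le hz hzy hbz,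
    hbx.mul_secant_eq hα hy.le hz (hzy.trans hyx) hbz.comm,
    div_lt_div_iff_of_pos_right (by positivity)] at hmono
  have : x ^ α < y ^ α := by nlinarith [rpow_pos_of_pos hx α, rpow_pos_of_pos hy α]
  exact (rpow_lt_rpow hy.le hyx (by linarith : (0 : ℝ) < α)).asymm this

lemma TriangleBalance.three_mul_rpow_div_eq {α y z : ℝ} (hz : 0 < z) (hy : 0 ≤ y)
    (h : TriangleBalance α z y y) (hsum : y + y + z = 1) :
    3 * (y / z) ^ α = 4 * (y / z) - 1 := by
  have hpow : y ^ α = (y / z) ^ α * z ^ α := by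
    rw [div_rpow hy hz.le, div_mul_cancel₀]
    positivity
  have : 0 < z ^ α := by positivity
  have : 0 ≤ (y / z) ^ α := by positivity
  rw [TriangleBalance, hpow] at h
  field_simp at h ⊢
  linear_combination h - 2 * hsum

lemma four_mul_sub_one_lt_three_mul_rpow {α t : ℝ} (hα : 4 / 3 ≤ α) (ht : 1 < t) :
    4 * t - 1 < 3 * t ^ α := by
  have := one_add_mul_self_lt_rpow_one_add (s := t - 1) (by linarith) (by linarith) (p := α)
    (by linarith)
  rw [add_sub_cancel] at this
  nlinarith

theorem triangle_no_strict_middle_of_large_alpha_general (α : ℝ)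
    (hα2 : 4 / 3 ≤ α)
    (v : Fin 3 → ℝ) (hv : InSimplex v) (heq : ∀ i, warmF α ptri v i = 0)
    (h21 : v 1 ≤ v 0) (h32 : v 2 ≤ v 1) :
    v 1 = v 2 ∨ v 2 = 0 := by
  obtain ⟨hpos, hsum⟩ := hv
  rw [Fin.sum_univ_three] at hsum
  by_contra! h
  have hz : 0 < v 2 := (hpos 2).lt_of_ne' h.2
  have hzy : v 2 < v 1 := h32.lt_of_ne' h.1
  have hbal (i j k : Fin 3) (hij : i ≠ j := by decide) (hik : i ≠ k := by decide)
      (hjk : j ≠ k := by decide) : TriangleBalance α (v i) (v j) (v k) :=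
    (warmF_ptri_eq_zero_iff α v hij hik hjk).1 (heq i)
  have hxy : v 0 = v 1 :=
    le_antisymm ((hbal 0 1 2).le_of_lt (by linarith) hz hzy (hbal 1 0 2) (hbal 2 0 1)) h21
  have hbz : TriangleBalance α (v 2) (v 1) (v 1) := hxy ▸ hbal 2 0 1
  have ht := hbz.three_mul_rpow_div_eq hz (hpos 1) (by rw [← hxy]; linarith)
  linarith [four_mul_sub_one_lt_three_mul_rpow hα2 ((one_lt_div hz).2 hzy)]

/-- **Triangle graph, `α ≥ 4/3`.** There is no equilibrium with
`v₁ ≥ v₂ > v₃ > 0`: every equilibrium with `v₁ ≥ v₂ ≥ v₃` satisfies `v₂ = v₃` or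
`v₃ = 0`. -/
theorem triangle_no_strict_middle_of_large_alpha (α : ℝ) (hα1 : 1 < α)
    (hα2 : 4 / 3 ≤ α)
    (v : Fin 3 → ℝ) (hv : InSimplex v) (heq : ∀ i, warmF α ptri v i = 0)
    (h21 : v 1 ≤ v 0) (h32 : v 2 ≤ v 1) :
    v 1 = v 2 ∨ v 2 = 0 :=
  triangle_no_strict_middle_of_large_alpha_general α hα2 v hv heq h21 h32
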